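/- The following are equivalent: (i) for every x ∈ X the stabilizer G_x is closed in G; (ii) τ(X,G) is T1; (iii) τ(X,G) is Hausdorff. -/

import Mathlib

/-! For `τ(X,G)` every orbit map `g ↦ g • x` is continuous and open. Continuity makes
`G_x = (· • x)⁻¹' {x}` closed once points are closed. Openness makes each orbit an open set and
identifies it with `G ⧸ G_x`, which is Hausdorff when `G_x` is closed; since distinct orbits are
disjoint open sets, `X` is then Hausdorff. -/

open TopologicalSpace Topology MulAction Set Pointwise

section OrbitMaps

variable {G X : Type*} [Group G] [TopologicalSpace G] [MulAction G X] [TopologicalSpace X]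

theorem isClosed_stabilizer_of_continuous_smul_const [T1Space X] {x : X}
    (hcont : Continuous fun g : G => g • x) : IsClosed (stabilizer G x : Set G) := by
  have : (stabilizer G x : Set G) = (fun g : G => g • x) ⁻¹' {x} := by
    ext g
    simp [mem_stabilizer_iff]
  rw [this]
  exact isClosed_singleton.preimage hcont

theorem isOpenMap_ofQuotientStabilizer {x : X} (hopen : IsOpenMap fun g : G => g • x) :
    IsOpenMap (ofQuotientStabilizer G x) := by
  intro U hU
  rw [← QuotientGroup.mk_surjective.image_preimage U, image_image]
  exact hopen _ (hU.preimage QuotientGroup.continuous_mk)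

theorem t2Space_of_isOpenMap_smul_const_of_isClosed_stabilizer [IsTopologicalGroup G]
    (hopen : ∀ x : X, IsOpenMap fun g : G => g • x)
    (hclosed : ∀ x : X, IsClosed (stabilizer G x : Set G)) : T2Space X := by
  refine ⟨fun y z hyz => ?_⟩
  rcases orbit.eq_or_disjoint (G := G) y z with horbit | hdisj
  · obtain ⟨g, rfl⟩ : z ∈ orbit G y := horbit ▸ mem_orbit_self z
    have : IsClosed (stabilizer G y : Set G) := hclosed y
    have hne : (QuotientGroup.mk 1 : G ⧸ stabilizer G y) ≠ QuotientGroup.mk g := fun h =>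
      hyz (by simpa using congrArg (ofQuotientStabilizer G y) h)
    obtain ⟨U, V, hU, hV, h1U, hgV, hUV⟩ := t2_separation hne
    have f_open := isOpenMap_ofQuotientStabilizer (hopen y)
    exact ⟨_, _, f_open U hU, f_open V hV, ⟨_, h1U, one_smul G y⟩, ⟨_, hgV, rfl⟩,
      (disjoint_image_iff (injective_ofQuotientStabilizer G y)).2 hUV⟩
  · exact ⟨_, _, (hopen y).isOpen_range, (hopen z).isOpen_range, mem_orbit_self y,
      mem_orbit_self z, hdisj⟩

end OrbitMaps

section OrbitTopology

variable {G X : Type*} [Group G] [MulAction G X]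

theorem preimage_smul_const_image_smul_const (x : X) (W : Set G) :
    (fun g : G => g • x) ⁻¹' ((· • x) '' W) = W * stabilizer G x := by
  ext g
  simp only [mem_preimage, mem_image, mem_mul, SetLike.mem_coe, mem_stabilizer_iff]
  constructor
  · rintro ⟨w, hw, hwg⟩
    exact ⟨w, hw, w⁻¹ * g, by rw [mul_smul, ← hwg, inv_smul_smul], mul_inv_cancel_left w g⟩
  · rintro ⟨w, hw, h, hh, rfl⟩
    exact ⟨w, hw, by rw [mul_smul, hh]⟩

variable [TopologicalSpace G]

abbrev orbitTopology (G X : Type*) [Group G] [TopologicalSpace G] [MulAction G X] :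
    TopologicalSpace X :=
  generateFrom {s : Set X | ∃ (U : Set G) (x : X), IsOpen U ∧ s = (· • x) '' U}

theorem continuous_smul_const_orbitTopology [SeparatelyContinuousMul G] (x : X) :
    Continuous[_, orbitTopology G X] fun g : G => g • x := by
  rw [orbitTopology, continuous_generateFrom_iff]
  rintro _ ⟨V, z, hV, rfl⟩
  by_cases hz : z ∈ orbit G x
  · obtain ⟨c, rfl⟩ := hz
    have : (· • c • x) '' V = (· • x) '' ((· * c) '' V) := by
      simp only [image_image, mul_smul]
    rw [this, preimage_smul_const_image_smul_const]
    exact (isOpenMap_mul_right c V hV).mul_right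
  · have : (fun g : G => g • x) ⁻¹' ((· • z) '' V) = ∅ :=
      eq_empty_of_forall_notMem fun g ⟨v, _, (hvg : v • z = g • x)⟩ =>
        hz ⟨v⁻¹ * g, show (v⁻¹ * g) • x = z by rw [mul_smul, ← hvg, inv_smul_smul]⟩
    rw [this]
    exact isOpen_empty

end OrbitTopology

theorem tau_t1_iff_hausdorff_iff_stabilizers_closed {G X : Type*} [Group G] [TopologicalSpace G]
    [IsTopologicalGroup G] [MulAction G X] :
    letI : TopologicalSpace X :=
      generateFrom {s : Set X | ∃ (U : Set G) (x : X), IsOpen U ∧ s = (· • x) '' U}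
    ((∀ x : X, IsClosed (MulAction.stabilizer G x : Set G)) ↔ T1Space X) ∧
      (T1Space X ↔ T2Space X) := by
  let _ := orbitTopology G X
  have hopen (x : X) : IsOpenMap fun g : G => g • x :=
    fun U hU => isOpen_generateFrom_of_mem ⟨U, x, hU, rfl⟩
  have closed_of_t1 (_ : T1Space X) (x : X) : IsClosed (stabilizer G x : Set G) :=
    isClosed_stabilizer_of_continuous_smul_const (continuous_smul_const_orbitTopology x)
  have t2_of_closed := t2Space_of_isOpenMap_smul_const_of_isClosed_stabilizer hopen
  exact ⟨⟨fun h => (t2_of_closed h).t1Space, closed_of_t1⟩,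
    ⟨fun h => t2_of_closed (closed_of_t1 h), fun _ => inferInstance⟩⟩
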